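/- arXiv:1308.4056 — 6 statements merged into one kernel-verified Lean document; each statement's English description precedes it below -/
import Mathlib

section
/- Let p be an odd prime, k ≥ 0, n = p^k, and q an integer coprime to n. Then the sign of the permutation of Z/nZ given by multiplication by q equals the Jacobi symbol (q/n). -/
/-!
Multiplication by a unit `u` of `ℤ/p^(k+1)` permutes the units and the non-units separately.
The non-units are `pℤ/p^(k+1) ≅ ℤ/p^k`, on which `u` acts as its reduction mod `p^k`; by
induction that part contributes `(u/p)^k`. The units form a cyclic group of even order, and on
such a group there is only one nontrivial character to `±1`; both the sign of translation by `u`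
(a translation by a generator is a cycle of even length) and the Legendre symbol of `u mod p` are
nontrivial, so they agree, and the unit part contributes `(u/p)`.
-/
open Equiv Equiv.Perm Function

theorem MonoidHom.eq_of_ne_one_of_isCyclic {G : Type*} [Group G] [IsCyclic G]
    {χ ψ : G →* ℤˣ} (hχ : χ ≠ 1) (hψ : ψ ≠ 1) : χ = ψ := by
  obtain ⟨g, hg⟩ := IsCyclic.exists_generator (α := G)
  have eq_neg_one (φ : G →* ℤˣ) (hφ : φ ≠ 1) : φ g = -1 :=
    (Int.units_eq_one_or _).resolve_left fun h => hφ ((φ.eq_iff_eq_on_generator hg 1).2 h)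
  exact (χ.eq_iff_eq_on_generator hg ψ).2 ((eq_neg_one χ hχ).trans (eq_neg_one ψ hψ).symm)

theorem Equiv.Perm.sign_eq_sign_subtypePerm_mul_sign_subtypePerm {α : Type*} [DecidableEq α]
    [Fintype α] (f : Perm α) {p : α → Prop} [DecidablePred p] (h : ∀ x, p (f x) ↔ p x) :
    sign f =
      sign (f.subtypePerm h) * sign (f.subtypePerm (p := fun x => ¬p x) fun x => (h x).not) := by
  rw [← sign_subtypeCongr]
  congr
  ext x
  by_cases hx : p x
  · simp [subtypeCongr.left_apply _ _ hx]
  · simp [subtypeCongr.right_apply _ _ hx]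

theorem sign_toPerm_eq_sign_toPerm_units_mul_sign_nonunits {M : Type*} [Monoid M] [Fintype M]
    [DecidableEq M] (u : Mˣ) :
    sign (MulAction.toPerm u : Perm M) = sign (MulAction.toPerm u : Perm Mˣ) *
      sign ((MulAction.toPerm u : Perm M).subtypePerm (p := fun x => ¬IsUnit x)
        fun x => (Units.isUnit_units_mul u x).not) := by
  let e : Mˣ ≃ {x : M // IsUnit x} :=
    { toFun v := ⟨v, v.isUnit⟩
      invFun x := x.2.unit
      left_inv _ := Units.ext rfl
      right_inv x := Subtype.ext x.2.unit_spec }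
  rw [sign_eq_sign_subtypePerm_mul_sign_subtypePerm _ (Units.isUnit_units_mul u)]
  congr 1
  exact (sign_eq_sign_of_equiv _ _ e fun v => rfl).symm

theorem sign_comp_toPermHom_ne_one_of_even_card {G : Type*} [Group G] [IsCyclic G] [Fintype G]
    [DecidableEq G] (hG : Even (Fintype.card G)) :
    sign.comp (MulAction.toPermHom G G) ≠ 1 := by
  obtain ⟨g, hg⟩ := IsCyclic.exists_generator (α := G)
  have hg1 : g ≠ 1 := by
    rintro rfl
    have : Fintype.card G = 1 := Fintype.card_eq_one_iff.2 ⟨1, fun x => by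
      obtain ⟨n, rfl⟩ := Subgroup.mem_zpowers_iff.1 (hg x); simp⟩
    simp [this] at hG
  have hcycle : (MulAction.toPerm g : Perm G).IsCycle :=
    ⟨1, by simpa using hg1, fun y _ => by
      obtain ⟨n, hn⟩ := Subgroup.mem_zpowers_iff.1 (hg y)
      exact ⟨n, by rw [← hn, ← MulAction.toPermHom_apply, ← map_zpow]; simp⟩⟩
  have hsupport : (MulAction.toPerm g : Perm G).support = Finset.univ := by
    ext x; simp [hg1]
  intro h
  have := DFunLike.congr_fun h g
  simp [hcycle.sign, hsupport, hG.neg_one_pow] at this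

theorem sign_comp_toPermHom_units_zmod_prime_pow_eq_quadraticChar {p : ℕ} [Fact p.Prime]
    (hp2 : p ≠ 2) (k : ℕ) :
    sign.comp (MulAction.toPermHom (ZMod (p ^ (k + 1)))ˣ (ZMod (p ^ (k + 1)))ˣ) =
      (quadraticChar (ZMod p)).toUnitHom.comp (ZMod.unitsMap (dvd_pow_self p k.succ_ne_zero)) := by
  have := ZMod.isCyclic_units_of_prime_pow p Fact.out hp2 (k + 1)
  apply MonoidHom.eq_of_ne_one_of_isCyclic
  · apply sign_comp_toPermHom_ne_one_of_even_card
    rw [ZMod.card_units_eq_totient, Nat.totient_prime_pow_succ Fact.out]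
    exact (Nat.Prime.even_sub_one Fact.out hp2).mul_left _
  · intro h
    obtain ⟨a, ha⟩ := quadraticChar_exists_neg_one (F := ZMod p) (by rwa [ZMod.ringChar_zmod_n])
    have ha0 : a ≠ 0 := by rintro rfl; simp at ha
    obtain ⟨u, hu⟩ := ZMod.unitsMap_surjective (dvd_pow_self p k.succ_ne_zero) (Units.mk0 a ha0)
    have := congrArg Units.val (DFunLike.congr_fun h u)
    simp [hu, ha] at this

namespace ZMod

variable {n N : ℕ} (h : n ∣ N)

def mulDivHom : ZMod n →+ ZMod N :=
  ZMod.lift n ⟨(AddMonoidHom.mulLeft ((N / n : ℕ) : ZMod N)).comp (Int.castAddHom (ZMod N)), by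
    simp only [AddMonoidHom.coe_comp, comp_apply, Int.coe_castAddHom, Int.cast_natCast,
      AddMonoidHom.coe_mulLeft]
    rw [← Nat.cast_mul, Nat.div_mul_cancel h, ZMod.natCast_self]⟩

theorem mulDivHom_intCast (z : ℤ) : mulDivHom h z = (N / n : ℕ) * z :=
  ZMod.lift_coe _ _ z

theorem mulDivHom_injective (hN : N ≠ 0) : Injective (mulDivHom h) := by
  obtain ⟨m, rfl⟩ := h
  have hn : 0 < n := Nat.pos_of_ne_zero (left_ne_zero_of_mul hN)
  have hm : (m : ℤ) ≠ 0 := by exact_mod_cast right_ne_zero_of_mul hN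
  rw [injective_iff_map_eq_zero]
  intro x hx
  obtain ⟨z, rfl⟩ := intCast_surjective x
  rw [mulDivHom_intCast, Nat.mul_div_cancel_left m hn, ← Int.cast_natCast, ← Int.cast_mul,
    intCast_zmod_eq_zero_iff_dvd, Nat.cast_mul, mul_comm (m : ℤ), mul_dvd_mul_iff_right hm] at hx
  rwa [intCast_zmod_eq_zero_iff_dvd]

theorem mulDivHom_castHom_mul (r : ZMod N) (x : ZMod n) :
    mulDivHom h (castHom h (ZMod n) r * x) = r * mulDivHom h x := by
  obtain ⟨w, rfl⟩ := intCast_surjective r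
  obtain ⟨z, rfl⟩ := intCast_surjective x
  rw [map_intCast, ← Int.cast_mul, mulDivHom_intCast, mulDivHom_intCast]
  push_cast
  ring

theorem mem_range_mulDivHom_iff_not_isUnit {p k : ℕ} [Fact p.Prime] (y : ZMod (p ^ (k + 1))) :
    y ∈ Set.range (mulDivHom (pow_dvd_pow p k.le_succ)) ↔ ¬IsUnit y := by
  have hp : p.Prime := Fact.out
  have hdiv : p ^ (k + 1) / p ^ k = p := by
    rw [pow_succ, Nat.mul_div_cancel_left _ (pow_pos hp.pos k)]
  constructor
  · rintro ⟨x, rfl⟩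
    obtain ⟨z, rfl⟩ := intCast_surjective x
    rw [mulDivHom_intCast, hdiv]
    exact fun hu => prime_natCast_not_isUnit_pow hp k.succ_pos (isUnit_of_mul_isUnit_left hu)
  · intro hy
    rw [← natCast_zmod_val y, isUnit_natCast_iff_not_dvd_pow hp k.succ_pos, not_not] at hy
    obtain ⟨c, hc⟩ := hy
    refine ⟨c, ?_⟩
    rw [← Int.cast_natCast, mulDivHom_intCast, hdiv, ← natCast_zmod_val y, hc]
    push_cast
    rfl

end ZMod

theorem sign_subtypePerm_nonunits_zmod_prime_pow {p : ℕ} [Fact p.Prime] (k : ℕ)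
    (u : (ZMod (p ^ (k + 1)))ˣ) :
    sign ((MulAction.toPerm u : Perm (ZMod (p ^ (k + 1)))).subtypePerm (p := fun x => ¬IsUnit x)
        fun x => (Units.isUnit_units_mul u x).not) =
      sign (MulAction.toPerm (ZMod.unitsMap (pow_dvd_pow p k.le_succ) u) :
        Perm (ZMod (p ^ k))) := by
  have hdvd : p ^ k ∣ p ^ (k + 1) := pow_dvd_pow p k.le_succ
  let e : ZMod (p ^ k) ≃ {y : ZMod (p ^ (k + 1)) // ¬IsUnit y} :=
    (Equiv.ofInjective _ (ZMod.mulDivHom_injective hdvd (NeZero.ne _))).trans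
      (Equiv.subtypeEquivRight ZMod.mem_range_mulDivHom_iff_not_isUnit)
  refine (sign_eq_sign_of_equiv _ _ e fun x => Subtype.ext ?_).symm
  exact ZMod.mulDivHom_castHom_mul hdvd (u : ZMod (p ^ (k + 1))) x

theorem sign_toPerm_zmod_prime_pow_eq_legendreSym_pow {p : ℕ} [Fact p.Prime] (hp2 : p ≠ 2)
    (q : ℤ) :
    ∀ (k : ℕ) (u : (ZMod (p ^ k))ˣ), (u : ZMod (p ^ k)) = q →
      (sign (MulAction.toPerm u : Perm (ZMod (p ^ k))) : ℤ) = legendreSym p q ^ k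
  | 0, u, _ => by
    have : Subsingleton (ZMod (p ^ 0)) := by rw [pow_zero]; infer_instance
    rw [Subsingleton.elim (MulAction.toPerm u) 1, map_one, Units.val_one, pow_zero]
  | k + 1, u, hu => by
    have hunits : (sign (MulAction.toPerm u : Perm (ZMod (p ^ (k + 1)))ˣ) : ℤ) =
        legendreSym p q := by
      have := congrArg (fun χ => (χ u : ℤ))
        (sign_comp_toPermHom_units_zmod_prime_pow_eq_quadraticChar hp2 k)
      simpa [ZMod.unitsMap_val, hu, legendreSym] using this
    have hnonunits := sign_toPerm_zmod_prime_pow_eq_legendreSym_pow hp2 q k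
      (ZMod.unitsMap (pow_dvd_pow p k.le_succ) u) (by simp [ZMod.unitsMap_def, hu])
    rw [sign_toPerm_eq_sign_toPerm_units_mul_sign_nonunits,
      sign_subtypePerm_nonunits_zmod_prime_pow, Units.val_mul, hunits, hnonunits, pow_succ']

/-- Let `p` be an odd prime, `k ≥ 0`, `n = p^k`, and `q` an integer coprime to `n`.  Then the
sign of the permutation of `ℤ/nℤ` given by multiplication by `q` equals the Jacobi symbol
`(q / n)`. -/
theorem sign_mul_perm_eq_jacobiSym_of_odd_prime_pow
    (p k n : ℕ) [NeZero n] (hp : p.Prime) (hodd : Odd p) (hn : n = p ^ k)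
    (q : ℤ) (hq : Int.gcd q n = 1)
    (π : Equiv.Perm (ZMod n)) (hπ : ∀ x : ZMod n, π x = (q : ZMod n) * x) :
    (Equiv.Perm.sign π : ℤ) = jacobiSym q n := by
  have : Fact p.Prime := ⟨hp⟩
  subst hn
  have hcop : IsCoprime q (p ^ k : ℕ) := Int.isCoprime_iff_gcd_eq_one.2 hq
  have hπ' : π = MulAction.toPerm (ZMod.unitOfIsCoprime q hcop) := Equiv.ext fun x => by
    rw [hπ, MulAction.toPerm_apply, Units.smul_def, ZMod.coe_unitOfIsCoprime, smul_eq_mul]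
  have hp2 : p ≠ 2 := by rintro rfl; exact Nat.not_odd_iff_even.2 even_two hodd
  rw [hπ', sign_toPerm_zmod_prime_pow_eq_legendreSym_pow hp2 q k _
      (ZMod.coe_unitOfIsCoprime q hcop),
    jacobiSym.pow_right, jacobiSym.legendreSym.to_jacobiSym]
end

section
/- Let p be an odd prime with p ≡ 3 (mod 4), k ≥ 0, n = p^k, and q coprime to n. Then the permutation of the quotient set {±1}\(Z/nZ) induced by multiplication by q is even. -/
open scoped Classical

/-- The equivalence relation on `ℤ/nℤ` identifying `x` with `-x`; its quotient is the orbit set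
`{±1}\(ℤ/nℤ)`. -/
def negSetoid (n : ℕ) : Setoid (ZMod n) where
  r x y := x = y ∨ x = -y
  iseqv := by
    refine ⟨fun x => Or.inl rfl, ?_, ?_⟩
    · rintro x y (rfl | rfl)
      · exact Or.inl rfl
      · exact Or.inr (neg_neg _).symm
    · rintro x y z (rfl | rfl) h2 <;> rcases h2 with rfl | h2 <;> simp_all

private def negMulPerm {n : ℕ} (u : (ZMod n)ˣ) : Equiv.Perm (Quotient (negSetoid n)) :=
  Quotient.congr (Units.mulLeft u) (fun a b => by
    show (a = b ∨ a = -b) ↔ ((u : ZMod n) * a = u * b ∨ (u : ZMod n) * a = -(u * b))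
    constructor
    · rintro (rfl | rfl)
      · exact Or.inl rfl
      · exact Or.inr (by ring)
    · rintro (h | h)
      · exact Or.inl ((Units.mul_right_inj u).mp h)
      · refine Or.inr ((Units.mul_right_inj u).mp ?_)
        rw [h]; ring)

@[simp] private theorem negMulPerm_mk {n : ℕ} (u : (ZMod n)ˣ) (x : ZMod n) :
    negMulPerm u (Quotient.mk (negSetoid n) x) = Quotient.mk (negSetoid n) ((u : ZMod n) * x) :=
  rfl

private def negMulHom (n : ℕ) : (ZMod n)ˣ →* Equiv.Perm (Quotient (negSetoid n)) where
  toFun := negMulPerm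
  map_one' := Equiv.ext fun y => Quotient.inductionOn y fun x => by
    simp
  map_mul' u v := Equiv.ext fun y => Quotient.inductionOn y fun x => by
    simp [mul_assoc]

private theorem zmod_sq_eq_one (p k : ℕ) (hp : p.Prime) (hodd : Odd p) (hk : k ≠ 0)
    [NeZero (p ^ k)] (x : ZMod (p ^ k)) (hx : x ^ 2 = 1) : x = 1 ∨ x = -1 := by
  obtain ⟨b, rfl⟩ := ZMod.intCast_surjective x
  have hpz : Prime (p : ℤ) := Nat.prime_iff_prime_int.mp hp
  have hd : ((p : ℤ)) ^ k ∣ (b - 1) * (b + 1) := by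
    have h0 : (((b - 1) * (b + 1) : ℤ) : ZMod (p ^ k)) = 0 := by
      push_cast
      linear_combination hx
    have := (ZMod.intCast_zmod_eq_zero_iff_dvd _ _).mp h0
    push_cast at this
    exact this
  by_cases hdb : (p : ℤ) ∣ b - 1
  · have hdb' : ¬ (p : ℤ) ∣ b + 1 := by
      intro h
      have h2 : (p : ℤ) ∣ 2 := by
        have := Int.dvd_sub h hdb
        simpa using this
      have : (p : ℤ) ≤ 2 := Int.le_of_dvd (by norm_num) h2
      have hp3 : 3 ≤ p := hp.two_le.lt_of_ne (by rintro rfl; simp [Nat.odd_iff] at hodd)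
      exact absurd this (by exact_mod_cast (by omega : ¬ p ≤ 2))
    have hc : IsCoprime ((p : ℤ) ^ k) (b + 1) :=
      (hpz.coprime_iff_not_dvd.mpr hdb').pow_left
    have : ((p : ℤ)) ^ k ∣ b - 1 := hc.dvd_of_dvd_mul_right hd
    left
    have : (((b - 1 : ℤ)) : ZMod (p ^ k)) = 0 := by
      rw [ZMod.intCast_zmod_eq_zero_iff_dvd]
      push_cast
      exact this
    push_cast at this
    linear_combination this
  · have hc : IsCoprime ((p : ℤ) ^ k) (b - 1) :=
      (hpz.coprime_iff_not_dvd.mpr hdb).pow_left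
    have : ((p : ℤ)) ^ k ∣ b + 1 := hc.dvd_of_dvd_mul_left hd
    right
    have h0 : (((b + 1 : ℤ)) : ZMod (p ^ k)) = 0 := by
      rw [ZMod.intCast_zmod_eq_zero_iff_dvd]
      push_cast
      exact this
    push_cast at h0
    linear_combination h0

/-- Let `p` be an odd prime with `p ≡ 3 (mod 4)`, `k ≥ 0`, `n = p^k`, and `q` coprime to `n`.
Then the permutation of `{±1}\(ℤ/nℤ)` induced by multiplication by `q` is even. -/
theorem quot_sign_eq_one_of_prime_three_mod_four
    (p k n : ℕ) [NeZero n] (hp : p.Prime) (hodd : Odd p) (hp4 : p % 4 = 3) (hn : n = p ^ k)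
    (q : ℤ) (hq : Int.gcd q n = 1)
    (σ : Equiv.Perm (Quotient (negSetoid n)))
    (hσ : ∀ x : ZMod n,
      σ (Quotient.mk (negSetoid n) x) = Quotient.mk (negSetoid n) ((q : ZMod n) * x)) :
    Equiv.Perm.sign σ = 1 := by
  rcases Nat.eq_zero_or_pos k with hk | hk
  · subst hk
    rw [pow_zero] at hn
    subst hn
    have : σ = Equiv.refl _ := Equiv.ext fun a => Subsingleton.elim _ _
    rw [this]
    simp
  · subst hn
    -- the unit of multiplication by q
    have hu : IsUnit ((q : ℤ) : ZMod (p ^ k)) := by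
      have h1 : IsCoprime q ((p ^ k : ℕ) : ℤ) := Int.isCoprime_iff_gcd_eq_one.mpr hq
      have h2 := h1.map (Int.castRingHom (ZMod (p ^ k)))
      simp only [Int.coe_castRingHom, Int.cast_natCast, ZMod.natCast_self] at h2
      exact isCoprime_zero_right.mp h2
    set u : (ZMod (p ^ k))ˣ := hu.unit with hu_def
    have hσ' : σ = negMulHom (p ^ k) u := by
      refine Equiv.ext fun y => Quotient.inductionOn y fun x => ?_
      rw [hσ]
      show _ = Quotient.mk _ ((u : ZMod (p ^ k)) * x)
      rw [hu.unit_spec]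
    set H : (ZMod (p ^ k))ˣ →* ℤˣ := (Equiv.Perm.sign).comp (negMulHom (p ^ k)) with hH
    have hcard : Fintype.card (ZMod (p ^ k))ˣ = p ^ (k - 1) * (p - 1) := by
      rw [ZMod.card_units_eq_totient, Nat.totient_prime_pow hp hk]
    set m : ℕ := p ^ (k - 1) * ((p - 1) / 2) with hm
    have hp3 : 3 ≤ p := by
      rcases hp.two_le.lt_or_eq with h | h
      · omega
      · exfalso; rw [← h] at hp4; omega
    have h2m : 2 * m = p ^ (k - 1) * (p - 1) := by
      rw [hm]
      have : (p - 1) / 2 * 2 = p - 1 := by omega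
      rw [mul_comm 2 _, mul_assoc, this]
    have hx2 : (u ^ m) ^ 2 = 1 := by
      rw [← pow_mul, mul_comm m 2, h2m, ← hcard, pow_card_eq_one]
    have hxval : ((u ^ m : (ZMod (p ^ k))ˣ) : ZMod (p ^ k)) ^ 2 = 1 := by
      rw [← Units.val_pow_eq_pow_val, hx2, Units.val_one]
    have hx1 : u ^ m = 1 ∨ u ^ m = -1 := by
      rcases zmod_sq_eq_one p k hp hodd (by omega) _ hxval with h | h
      · left; ext; simpa using h
      · right; ext; simpa using h
    have hHneg : H (-1) = 1 := by
      rw [hH]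
      simp only [MonoidHom.comp_apply]
      have : negMulHom (p ^ k) (-1) = 1 := by
        refine Equiv.ext fun y => Quotient.inductionOn y fun x => ?_
        show Quotient.mk _ (((-1 : (ZMod (p ^ k))ˣ) : ZMod (p ^ k)) * x) = Quotient.mk _ x
        exact Quotient.sound (Or.inr (by simp))
      rw [this, map_one]
    have hHm : H u ^ m = 1 := by
      rw [← map_pow]
      rcases hx1 with h | h
      · rw [h, map_one]
      · rw [h, hHneg]
    have hmodd : Odd m := by
      refine Odd.mul (hodd.pow) ?_
      rw [Nat.odd_iff]
      omega
    have hHu : H u = 1 := by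
      rcases Int.units_eq_one_or (H u) with h | h
      · exact h
      · exfalso
        rw [h, hmodd.neg_one_pow] at hHm
        exact absurd hHm (by decide)
    rw [hσ']
    exact hHu
end

section
/- Let n = 2^k with k > 1 and let q be odd. Then the sign of the permutation of Z/nZ given by multiplication by q equals (-1)^{(q-1)/2}. -/
/-!
Split `ZMod (2 ^ (k + 1))` into its units and its non-units. The non-units are the doubles of
`ZMod (2 ^ k)`, on which multiplication by `q` acts as it does on `ZMod (2 ^ k)`. On the units it is
a translation of the group `(ZMod (2 ^ (k + 1)))ˣ`, whose cycles are the cosets of `⟨q⟩`; for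
`k + 1 ≥ 3` this group is not cyclic, so `⟨q⟩` has even index and the translation is even. Hence
the sign is the same as on `ZMod 4`, where multiplication by `q` is the identity or the
transposition of `1` and `3`.
-/
open Equiv Equiv.Perm

theorem Subgroup.bijective_out_mul {G : Type*} [Group G] (H : Subgroup G) :
    Function.Bijective fun p : (G ⧸ H) × H => p.1.out * (p.2 : G) := by
  constructor
  · rintro ⟨c, h⟩ ⟨c', h'⟩ heq
    obtain rfl : c = c' := by
      simpa [QuotientGroup.mk_mul_of_mem _ h.2, QuotientGroup.mk_mul_of_mem _ h'.2] using
        congrArg ((↑) : G → G ⧸ H) heq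
    exact Prod.ext rfl (Subtype.ext (mul_left_cancel heq))
  · intro x
    exact ⟨((x : G ⧸ H), ⟨(x : G ⧸ H).out⁻¹ * x, QuotientGroup.eq.mp (QuotientGroup.out_eq' _)⟩),
      mul_inv_cancel_left _ _⟩

theorem Equiv.Perm.sign_mulRight_eq_pow_index {G : Type*} [Group G] [Fintype G] [DecidableEq G]
    (H : Subgroup G) [DecidablePred (· ∈ H)] (h : H) :
    sign (Equiv.mulRight (h : G)) = sign (Equiv.mulRight h) ^ H.index := by
  classical
  calc sign (Equiv.mulRight (h : G))
      = sign (prodCongrRight fun _ : G ⧸ H => Equiv.mulRight h) :=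
        (sign_eq_sign_of_equiv _ _ (Equiv.ofBijective _ H.bijective_out_mul) fun _ =>
          (mul_assoc _ _ _).symm).symm
    _ = sign (Equiv.mulRight h) ^ H.index := by
        rw [sign_prodCongrRight, Finset.prod_const, Finset.card_univ, Subgroup.index,
          Nat.card_eq_fintype_card]

namespace ZMod

def doubling (k : ℕ) : ZMod (2 ^ k) →+ ZMod (2 ^ (k + 1)) :=
  lift (2 ^ k) ⟨2 • Int.castAddHom _, by
    simp only [AddMonoidHom.smul_apply, Int.coe_castAddHom, Int.cast_natCast]
    rw [nsmul_eq_mul, ← Nat.cast_mul, ← pow_succ', natCast_self]⟩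

variable {k : ℕ}

theorem doubling_intCast (a : ℤ) : doubling k a = 2 * a := by
  simp [doubling, two_mul]

theorem doubling_injective : Function.Injective (doubling k) := by
  rw [injective_iff_map_eq_zero]
  intro x hx
  obtain ⟨a, rfl⟩ := intCast_surjective x
  rw [doubling_intCast, ← Int.cast_two (R := ZMod _), ← Int.cast_mul,
    intCast_zmod_eq_zero_iff_dvd, pow_succ', Nat.cast_mul, Nat.cast_two,
    mul_dvd_mul_iff_left two_ne_zero] at hx
  exact (intCast_zmod_eq_zero_iff_dvd _ _).mpr hx

theorem not_isUnit_doubling (x : ZMod (2 ^ k)) : ¬IsUnit (doubling k x) := by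
  obtain ⟨a, rfl⟩ := intCast_surjective x
  intro hunit
  have h2 := hunit.map (castHom (dvd_pow_self 2 k.succ_ne_zero) (ZMod 2))
  rw [doubling_intCast, map_mul, map_ofNat, show (2 : ZMod 2) = 0 from rfl, zero_mul] at h2
  exact not_isUnit_zero h2

theorem doubling_cast_mul (u : ZMod (2 ^ (k + 1))) (x : ZMod (2 ^ k)) :
    doubling k (u.cast * x) = u * doubling k x := by
  obtain ⟨b, rfl⟩ := intCast_surjective u
  obtain ⟨a, rfl⟩ := intCast_surjective x
  rw [cast_intCast (pow_dvd_pow 2 k.le_succ), ← Int.cast_mul, doubling_intCast, doubling_intCast]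
  push_cast
  ring

theorem bijective_sumElim_doubling_val :
    Function.Bijective
      (Sum.elim (doubling k) ((↑) : (ZMod (2 ^ (k + 1)))ˣ → ZMod (2 ^ (k + 1)))) := by
  refine (Fintype.bijective_iff_injective_and_card _).mpr ⟨?_, ?_⟩
  · exact doubling_injective.sumElim Units.val_injective fun x v hx =>
      not_isUnit_doubling x (hx ▸ v.isUnit)
  · rw [Fintype.card_sum, card, card, card_units_eq_totient,
      Nat.totient_prime_pow_succ Nat.prime_two, pow_succ]
    ring

theorem sign_mulLeft_units_two_pow (hk : 3 ≤ k) (u : (ZMod (2 ^ k))ˣ) :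
    sign (Equiv.mulLeft u) = 1 := by
  classical
  have hcard : Nat.card (ZMod (2 ^ k))ˣ = 2 ^ (k - 1) := by
    rw [Nat.card_eq_fintype_card, card_units_eq_totient,
      Nat.totient_prime_pow Nat.prime_two (by omega), Nat.add_one_sub_one, mul_one]
  obtain ⟨i, -, hi⟩ := (Nat.dvd_prime_pow Nat.prime_two).mp
    (hcard ▸ (Subgroup.zpowers u).index_dvd_card)
  obtain ⟨j, rfl⟩ : ∃ j, i = j + 1 := by
    refine Nat.exists_eq_succ_of_ne_zero fun hi0 => ?_
    have hnot : ¬IsCyclic (ZMod (2 ^ k))ˣ := by rw [isCyclic_units_two_pow_iff]; omega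
    exact hnot (isCyclic_iff_exists_zpowers_eq_top.mpr
      ⟨u, Subgroup.index_eq_one.mp (by rw [hi, hi0, pow_zero])⟩)
  rw [show Equiv.mulLeft u = Equiv.mulRight u from Equiv.ext fun v => mul_comm u v,
    sign_mulRight_eq_pow_index (Subgroup.zpowers u) ⟨u, Subgroup.mem_zpowers u⟩, hi, pow_succ,
    pow_mul, Int.units_sq]

theorem sign_unitsMulLeft_two_pow_succ (u : (ZMod (2 ^ (k + 1)))ˣ) :
    sign (Units.mulLeft u) =
      sign (Units.mulLeft (unitsMap (pow_dvd_pow 2 k.le_succ) u)) * sign (Equiv.mulLeft u) := by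
  rw [← sign_sumCongr]
  refine (sign_eq_sign_of_equiv _ _ (Equiv.ofBijective _ bijective_sumElim_doubling_val) ?_).symm
  rintro (x | v)
  · exact doubling_cast_mul (u : ZMod (2 ^ (k + 1))) x
  · rfl

theorem sign_unitsMulLeft_two_pow (hk : 2 ≤ k) (u : (ZMod (2 ^ k))ˣ) :
    sign (Units.mulLeft u) = sign (Units.mulLeft (unitsMap (pow_dvd_pow 2 hk : 4 ∣ 2 ^ k) u)) := by
  induction k, hk using Nat.le_induction with
  | base => simp
  | succ k hk ih =>
    rw [sign_unitsMulLeft_two_pow_succ, sign_mulLeft_units_two_pow (by omega), mul_one, ih,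
      ← MonoidHom.comp_apply, unitsMap_comp]

theorem sign_unitsMulLeft_zmod_four (v : (ZMod 4)ˣ) :
    sign (Units.mulLeft v) = if (v : ZMod 4) = 1 then 1 else -1 := by
  revert v
  decide

end ZMod

theorem neg_one_zpow_sub_one_div_two {q : ℤ} (hq : Odd q) :
    (-1 : ℤˣ) ^ ((q - 1) / 2) = if (q : ZMod 4) = 1 then 1 else -1 := by
  have h4 : (4 : ZMod 4) = 0 := rfl
  obtain ⟨t, rfl⟩ := hq
  rcases Int.even_or_odd' t with ⟨m, rfl | rfl⟩
  · have h : ((2 * (2 * m) + 1 : ℤ) : ZMod 4) = 1 := by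
      push_cast
      linear_combination (m : ZMod 4) * h4
    rw [if_pos h, show (2 * (2 * m) + 1 - 1) / 2 = 2 * m by omega, zpow_mul]
    simp
  · have h : ((2 * (2 * m + 1) + 1 : ℤ) : ZMod 4) = 3 := by
      push_cast
      linear_combination (m : ZMod 4) * h4
    rw [h, if_neg (by decide), show (2 * (2 * m + 1) + 1 - 1) / 2 = 2 * m + 1 by omega, zpow_add,
      zpow_mul]
    simp

/-- Let `n = 2^k` with `k > 1` and let `q` be odd.  Then the sign of the permutation of `ℤ/nℤ`
given by multiplication by `q` equals `(-1)^{(q-1)/2}`. -/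
theorem sign_mul_perm_two_pow
    (k n : ℕ) [NeZero n] (hk : 1 < k) (hn : n = 2 ^ k) (q : ℤ) (hq : Odd q)
    (π : Equiv.Perm (ZMod n)) (hπ : ∀ x : ZMod n, π x = (q : ZMod n) * x) :
    Equiv.Perm.sign π = (-1 : ℤˣ) ^ ((q - 1) / 2) := by
  subst hn
  obtain ⟨u, hu⟩ : IsUnit (q : ZMod (2 ^ k)) := by
    rw [ZMod.coe_int_isUnit_iff_isCoprime, Nat.cast_pow, Nat.cast_ofNat]
    exact (Int.isCoprime_two_left.mpr hq).pow_left
  have hπu : π = Units.mulLeft u := Equiv.ext fun x => by rw [hπ, ← hu]; rfl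
  have hu4 : (ZMod.unitsMap (pow_dvd_pow 2 hk : 4 ∣ 2 ^ k) u : ZMod 4) = q := by
    rw [ZMod.unitsMap_val, hu, ZMod.cast_intCast (pow_dvd_pow 2 hk)]
  rw [hπu, ZMod.sign_unitsMulLeft_two_pow hk, ZMod.sign_unitsMulLeft_zmod_four, hu4,
    neg_one_zpow_sub_one_div_two hq]
end

section
/- Let m, n, q be pairwise coprime integers with m, n positive. Then sgn⁺_{mn}(q) = sgn⁺_m(q)^n · sgn⁺_n(q)^m, where sgn⁺_N(q) denotes the sign of the permutation of Z/NZ given by multiplication by q. -/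
/-- Let `m, n, q` be pairwise coprime integers with `m, n` positive.  Then
`sgn⁺_{mn}(q) = sgn⁺_m(q)^n * sgn⁺_n(q)^m`, where `sgn⁺_N(q)` denotes the sign of the
permutation of `ℤ/Nℤ` given by multiplication by `q`. -/
theorem sign_mul_perm_mul
    (m n : ℕ) [NeZero m] [NeZero n] (q : ℤ)
    (hmn : Nat.Coprime m n) (hqm : Int.gcd q m = 1) (hqn : Int.gcd q n = 1)
    (πmn : Equiv.Perm (ZMod (m * n))) (hπmn : ∀ x : ZMod (m * n), πmn x = (q : ZMod (m * n)) * x)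
    (πm : Equiv.Perm (ZMod m)) (hπm : ∀ x : ZMod m, πm x = (q : ZMod m) * x)
    (πn : Equiv.Perm (ZMod n)) (hπn : ∀ x : ZMod n, πn x = (q : ZMod n) * x) :
    Equiv.Perm.sign πmn = Equiv.Perm.sign πm ^ n * Equiv.Perm.sign πn ^ m := by
  classical
  let e := ZMod.chineseRemainder hmn
  have hprod : Equiv.prodCongr πm πn =
      (Equiv.prodCongrLeft fun _ : ZMod n => πm) *
        Equiv.prodCongrRight (fun _ : ZMod m => πn) := by
    ext x <;>
      simp [Equiv.prodCongrRight, Equiv.prodCongrLeft, Equiv.Perm.mul_apply]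
  have hq : e (q : ZMod (m * n)) = ((q : ZMod m), (q : ZMod n)) := by
    have h1 := map_intCast (e : ZMod (m * n) →+* ZMod m × ZMod n) q
    have : ((q : ℤ) : ZMod m × ZMod n) = ((q : ZMod m), (q : ZMod n)) := rfl
    rw [this] at h1
    exact h1
  have hconj : πmn = Equiv.permCongr e.toEquiv.symm (Equiv.prodCongr πm πn) := by
    ext x
    apply e.toEquiv.injective
    simp only [Equiv.permCongr_apply, Equiv.symm_symm, Equiv.apply_symm_apply]
    have h2 : e.toEquiv (πmn x) = e ((q : ZMod (m * n)) * x) := by rw [hπmn]; rfl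
    rw [h2, map_mul, hq]
    have h3 : e.toEquiv x = e x := rfl
    rw [h3]
    obtain ⟨a, b⟩ := e x
    simp [hπm, hπn, Prod.ext_iff, Equiv.prodCongr, mul_comm]
  rw [hconj, Equiv.Perm.sign_permCongr, hprod, map_mul,
    Equiv.Perm.sign_prodCongrLeft, Equiv.Perm.sign_prodCongrRight]
  simp [Finset.prod_const, ZMod.card]
end

section
/- For any integers n > 0 and q coprime to n, the sign of the multiplication-by-q permutation of Z/nZ equals: (-1)^{(q-1)/2} if n ≡ 0 (mod 4); the Jacobi symbol (q/n) if n is odd; and 1 if n ≡ 2 (mod 4). -/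
/-
Write `σ_n(u)` for the sign of `x ↦ u x` on `ZMod n`; it is a character of `(ZMod n)ˣ`.
In base `a`, a residue mod `a m` is `r + a y`, and multiplication by `Q` becomes
`(r, y) ↦ (Q r mod a, Q y + ⌊Q r / a⌋ mod m)`, so `σ_{am}(Q) = σ_a(Q)^m σ_m(Q)^a` times the signs
of the translations `y ↦ y + ⌊Q r / a⌋` of `ZMod m`. A translation is a power of an `m`-cycle,
hence even when `m` is odd: this gives `σ_{am} = σ_a σ_m` for odd `a, m` and `σ_{2m} = 1` for
odd `m`. For even `m` only the carry `⌊Q / 2⌋` survives, which yields `(-1)^((q-1)/2)`.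
For an odd prime `p`, a generator of `(ZMod p)ˣ` acts as one `(p-1)`-cycle, so `σ_p` is the
nontrivial character of this cyclic group, the Legendre symbol; multiplicativity in odd moduli
then gives the Jacobi symbol.
-/

open Equiv Equiv.Perm

theorem Int.units_pow_of_odd (u : ℤˣ) {n : ℕ} (hn : Odd n) : u ^ n = u := by
  rw [Int.units_pow_eq_pow_mod_two, Nat.odd_iff.mp hn, pow_one]

namespace ZMod

theorem sign_addLeft_natCast (m c : ℕ) [NeZero m] :
    sign (Equiv.addLeft (c : ZMod m)) = (-1) ^ ((m - 1) * c) := by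
  obtain ⟨k, rfl⟩ := Nat.exists_eq_succ_of_ne_zero (NeZero.ne m)
  have hrot : sign (Equiv.addLeft (1 : ZMod (k + 1))) = (-1) ^ k := by
    have : Equiv.addLeft (1 : ZMod (k + 1)) = finRotate (k + 1) :=
      Equiv.ext fun i => (add_comm _ _).trans (finRotate_apply i).symm
    rw [this]
    exact sign_finRotate (k + 1)
  rw [← nsmul_one, ← nsmul_addLeft, map_pow, hrot, pow_mul, Nat.succ_sub_one]

def mulSign (n : ℕ) [NeZero n] : (ZMod n)ˣ →* ℤˣ :=
  sign.comp (MulAction.toPermHom (ZMod n)ˣ (ZMod n))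

theorem mulSign_eq_sign {n : ℕ} [NeZero n] (u : (ZMod n)ˣ) (π : Perm (ZMod n))
    (hπ : ∀ x, π x = u * x) : mulSign n u = sign π := by
  rw [show π = MulAction.toPerm u from Equiv.ext hπ]
  rfl

noncomputable def digitsEquiv (a m : ℕ) [NeZero a] [NeZero m] : ZMod a × ZMod m ≃ ZMod (a * m) :=
  Equiv.ofBijective (fun p => ((p.1.val + a * p.2.val : ℕ) : ZMod (a * m))) <| by
    have hlt (r : ZMod a) (y : ZMod m) : r.val + a * y.val < a * m :=
      calc r.val + a * y.val < a + a * y.val := Nat.add_lt_add_right r.val_lt _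
        _ = a * (y.val + 1) := by ring
        _ ≤ a * m := Nat.mul_le_mul_left a y.val_lt
    have hdigits (r : ZMod a) (y : ZMod m) :
        (r.val + a * y.val) % a = r.val ∧ (r.val + a * y.val) / a = y.val := by
      refine ⟨by rw [Nat.add_mul_mod_self_left, Nat.mod_eq_of_lt r.val_lt], ?_⟩
      rw [Nat.add_mul_div_left _ _ (NeZero.pos a), Nat.div_eq_of_lt r.val_lt, zero_add]
    rw [Fintype.bijective_iff_injective_and_card]
    refine ⟨fun ⟨r, y⟩ ⟨r', y'⟩ h => ?_, by simp [ZMod.card]⟩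
    have h := congrArg ZMod.val h
    simp only [val_natCast_of_lt (hlt _ _)] at h
    obtain ⟨hr, hy⟩ := hdigits r y
    obtain ⟨hr', hy'⟩ := hdigits r' y'
    exact Prod.ext (val_injective _ (hr.symm.trans (h ▸ hr')))
      (val_injective _ (hy.symm.trans (h ▸ hy')))

section Digits

variable {a m : ℕ} [NeZero a] [NeZero m]

theorem digitsEquiv_natCast (i j : ℕ) :
    digitsEquiv a m ((i : ZMod a), (j : ZMod m)) = ((i % a + a * j : ℕ) : ZMod (a * m)) := by
  change (((i : ZMod a).val + a * (j : ZMod m).val : ℕ) : ZMod (a * m)) = _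
  rw [val_natCast, val_natCast, natCast_eq_natCast_iff]
  exact Nat.ModEq.add_left _ (Nat.ModEq.mul_left' a (Nat.mod_modEq j m))

theorem natCast_mul_digitsEquiv (Q : ℕ) (r : ZMod a) (y : ZMod m) :
    (Q : ZMod (a * m)) * digitsEquiv a m (r, y) =
      digitsEquiv a m ((Q : ZMod a) * r, ((Q * r.val / a : ℕ) : ZMod m) + Q * y) := by
  have hdiv := Nat.mod_add_div (Q * r.val) a
  calc (Q : ZMod (a * m)) * digitsEquiv a m (r, y)
      = ((Q * r.val % a + a * (Q * r.val / a + Q * y.val) : ℕ) : ZMod (a * m)) := by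
        change (Q : ZMod (a * m)) * ((r.val + a * y.val : ℕ) : ZMod (a * m)) = _
        rw [← Nat.cast_mul]
        congr 1
        rw [mul_add a, ← add_assoc, hdiv]
        ring
    _ = digitsEquiv a m ((Q : ZMod a) * r, ((Q * r.val / a : ℕ) : ZMod m) + Q * y) := by
        rw [← digitsEquiv_natCast]
        push_cast
        rw [natCast_zmod_val, natCast_zmod_val]

theorem mulSign_mul_modulus (u : (ZMod (a * m))ˣ) :
    mulSign (a * m) u = mulSign a (unitsMap (dvd_mul_right a m) u) ^ m *
      ((∏ r : ZMod a, sign (Equiv.addLeft (((u : ZMod (a * m)).val * r.val / a : ℕ) : ZMod m))) *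
        mulSign m (unitsMap (dvd_mul_left m a) u) ^ a) := by
  set Q := (u : ZMod (a * m)).val
  set ua := unitsMap (dvd_mul_right a m) u
  set um := unitsMap (dvd_mul_left m a) u
  have hu : (u : ZMod (a * m)) = Q := (natCast_zmod_val _).symm
  have hua : (ua : ZMod a) = Q := by rw [unitsMap_val, cast_eq_val]
  have hum : (um : ZMod m) = Q := by rw [unitsMap_val, cast_eq_val]
  let τ (r : ZMod a) : Perm (ZMod m) :=
    Equiv.addLeft ((Q * r.val / a : ℕ) : ZMod m) * MulAction.toPerm um
  have hconj : MulAction.toPerm u = (digitsEquiv a m).permCongr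
      (prodCongrLeft (fun _ => MulAction.toPerm ua) * prodCongrRight τ) := by
    refine Equiv.ext fun x => ?_
    obtain ⟨⟨r, y⟩, rfl⟩ := (digitsEquiv a m).surjective x
    simp only [permCongr_apply, symm_apply_apply, Perm.mul_apply]
    simp [τ, Units.smul_def, hu, hua, hum, natCast_mul_digitsEquiv]
  change sign (MulAction.toPerm u) = _
  rw [hconj, sign_permCongr, map_mul, sign_prodCongrLeft, sign_prodCongrRight]
  simp only [τ, map_mul, Finset.prod_mul_distrib, Finset.prod_const, Finset.card_univ, ZMod.card]
  rfl

theorem mulSign_mul_modulus_of_odd_right (hm : Odd m) (u : (ZMod (a * m))ˣ) :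
    mulSign (a * m) u = mulSign a (unitsMap (dvd_mul_right a m) u) ^ m *
      mulSign m (unitsMap (dvd_mul_left m a) u) ^ a := by
  have heven : Even (m - 1) := Nat.Odd.sub_odd hm odd_one
  rw [mulSign_mul_modulus, Finset.prod_eq_one fun r _ => by
    rw [sign_addLeft_natCast, (heven.mul_right _).neg_one_pow], one_mul]

theorem mulSign_two_mul_of_even (hm : Even m) (u : (ZMod (2 * m))ˣ) :
    mulSign (2 * m) u = (-1) ^ ((u : ZMod (2 * m)).val / 2) := by
  have hodd : Odd (m - 1) := Nat.Even.sub_odd (by have := NeZero.pos m; omega) hm odd_one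
  rw [mulSign_mul_modulus, Int.units_sq, mul_one, Subsingleton.elim (unitsMap _ u) 1, map_one,
    one_pow, one_mul, show (Finset.univ : Finset (ZMod 2)) = {0, 1} from rfl, Finset.prod_pair zero_ne_one]
  simp only [val_zero, mul_zero, Nat.zero_div, Nat.cast_zero, addLeft_zero, map_one, one_mul]
  rw [sign_addLeft_natCast, val_one, mul_one, pow_mul, hodd.neg_one_pow]

end Digits

section Prime

variable {p : ℕ} [Fact p.Prime]

theorem mulSign_eq_neg_one_of_generator (hp : p ≠ 2) {g : (ZMod p)ˣ}
    (hg : ∀ x, x ∈ Subgroup.zpowers g) : mulSign p g = -1 := by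
  have : Fact (2 < p) := ⟨lt_of_le_of_ne (Fact.out : p.Prime).two_le (Ne.symm hp)⟩
  have hg1 : (g : ZMod p) ≠ 1 := fun h => by
    obtain ⟨k, hk⟩ := Subgroup.mem_zpowers_iff.mp (hg (-1))
    rw [Units.val_eq_one.mp h, one_zpow] at hk
    exact neg_one_ne_one (congrArg Units.val hk).symm
  set σ := MulAction.toPermHom (ZMod p)ˣ (ZMod p) g
  have hσ (x : ZMod p) : σ x = x ↔ x = 0 := by
    change (g : ZMod p) * x = x ↔ _
    rw [← sub_eq_zero, ← sub_one_mul, mul_eq_zero, sub_eq_zero, or_iff_right hg1]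
  have hcycle : σ.IsCycle := by
    refine ⟨1, by simp [hσ], fun y hy => ?_⟩
    obtain ⟨k, hk⟩ := Subgroup.mem_zpowers_iff.mp (hg (Units.mk0 y (mt (hσ y).mpr hy)))
    refine ⟨k, ?_⟩
    rw [← map_zpow]
    simp [hk]
  have hsupport : σ.support = {0}ᶜ := by
    ext x
    simp [hσ]
  have heven : Even (p - 1) := (Fact.out : p.Prime).even_sub_one hp
  change sign σ = -1
  rw [hcycle.sign, hsupport, Finset.card_compl, Finset.card_singleton, ZMod.card, heven.neg_one_pow]

theorem mulSign_eq_quadraticChar_toUnitHom (hp : p ≠ 2) :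
    mulSign p = (quadraticChar (ZMod p)).toUnitHom := by
  obtain ⟨g, hg⟩ := IsCyclic.exists_generator (α := (ZMod p)ˣ)
  rw [MonoidHom.eq_iff_eq_on_generator hg, mulSign_eq_neg_one_of_generator hp hg]
  refine ((Int.units_eq_one_or _).resolve_left fun h1 => ?_).symm
  have htriv : (quadraticChar (ZMod p)).toUnitHom = 1 :=
    (MonoidHom.eq_iff_eq_on_generator hg _ _).mpr h1
  obtain ⟨a, ha⟩ := quadraticChar_exists_neg_one (F := ZMod p) (by rwa [ringChar_zmod_n])
  have ha0 : a ≠ 0 := by rintro rfl; simp at ha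
  have := congrArg (fun f => (f (Units.mk0 a ha0) : ℤ)) htriv
  simp [ha] at this

end Prime

theorem mulSign_eq_jacobiSym {n : ℕ} [hn0 : NeZero n] (hn : Odd n) (q : ℤ) (u : (ZMod n)ˣ)
    (hu : (u : ZMod n) = q) : (mulSign n u : ℤ) = jacobiSym q n := by
  induction n using Nat.recOnMul generalizing hn0 q with
  | zero => exact absurd hn (by decide)
  | one => rw [Subsingleton.elim u 1, map_one, jacobiSym.one_right, Units.val_one]
  | prime p hp =>
    have : Fact p.Prime := ⟨hp⟩
    rw [mulSign_eq_quadraticChar_toUnitHom (hn.ne_two_of_dvd_nat dvd_rfl), MulChar.coe_toUnitHom,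
      hu, ← jacobiSym.legendreSym.to_jacobiSym]
    rfl
  | mul a b iha ihb =>
    obtain ⟨ha, hb⟩ := Nat.odd_mul.mp hn
    have : NeZero a := ⟨ha.pos.ne'⟩
    have : NeZero b := ⟨hb.pos.ne'⟩
    rw [mulSign_mul_modulus_of_odd_right hb, Int.units_pow_of_odd _ ha,
      Int.units_pow_of_odd _ hb, Units.val_mul,
      iha ha q _ (by rw [unitsMap_val, hu, cast_intCast (dvd_mul_right a b)]),
      ihb hb q _ (by rw [unitsMap_val, hu, cast_intCast (dvd_mul_left b a)]), jacobiSym.mul_right]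

theorem mulSign_of_mod_four_eq_two {n : ℕ} [NeZero n] (hn : n % 4 = 2) (u : (ZMod n)ˣ) :
    mulSign n u = 1 := by
  obtain ⟨m, rfl⟩ : ∃ m, n = 2 * m := ⟨n / 2, by omega⟩
  have : NeZero m := ⟨by omega⟩
  rw [mulSign_mul_modulus_of_odd_right (Nat.odd_iff.mpr (by omega)), Int.units_sq,
    Subsingleton.elim (unitsMap _ u) 1, map_one, one_pow, one_mul]

theorem mulSign_of_mod_four_eq_zero {n : ℕ} [NeZero n] (hn : n % 4 = 0) (q : ℤ) (u : (ZMod n)ˣ)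
    (hu : (u : ZMod n) = q) : mulSign n u = (-1) ^ ((q - 1) / 2) := by
  obtain ⟨m, rfl⟩ : ∃ m, n = 2 * m := ⟨n / 2, by omega⟩
  have : NeZero m := ⟨right_ne_zero_of_mul (NeZero.ne (2 * m))⟩
  rw [mulSign_two_mul_of_even (Nat.even_iff.mpr (by omega))]
  set Q := (u : ZMod (2 * m)).val
  have hQq : 4 ∣ q - Q := by
    have hmod : (Q : ℤ) ≡ q [ZMOD (2 * m : ℕ)] := by
      rw [← intCast_eq_intCast_iff, Int.cast_natCast, natCast_zmod_val, hu]
    exact (Int.ModEq.of_dvd (show (4 : ℤ) ∣ (2 * m : ℕ) by omega) hmod).dvd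
  have hQodd : Q % 2 = 1 := by
    refine Nat.odd_iff.mp (natCast_eq_one_iff_odd.mp ?_)
    rw [← cast_eq_val, ← unitsMap_val (dvd_mul_right 2 m), Subsingleton.elim (unitsMap _ u) 1,
      Units.val_one]
  have hexp : (q - 1) / 2 = ((Q / 2 : ℕ) : ℤ) + 2 * ((q - Q) / 4) := by omega
  rw [hexp, zpow_add, (even_two_mul _).neg_one_zpow, mul_one, zpow_natCast]

end ZMod

/-- For any integers `n > 0` and `q` coprime to `n`, the sign of the multiplication-by-`q`
permutation of `ℤ/nℤ` equals `(-1)^{(q-1)/2}` if `n ≡ 0 (mod 4)`, the Jacobi symbol `(q/n)` if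
`n` is odd, and `1` if `n ≡ 2 (mod 4)`. -/
theorem sign_mul_perm_formula
    (n : ℕ) [NeZero n] (q : ℤ) (hq : Int.gcd q n = 1)
    (π : Equiv.Perm (ZMod n)) (hπ : ∀ x : ZMod n, π x = (q : ZMod n) * x) :
    (n % 4 = 0 → Equiv.Perm.sign π = (-1 : ℤˣ) ^ ((q - 1) / 2)) ∧
    (n % 2 = 1 → (Equiv.Perm.sign π : ℤ) = jacobiSym q n) ∧
    (n % 4 = 2 → Equiv.Perm.sign π = 1) := by
  obtain ⟨u, hu⟩ : ∃ u : (ZMod n)ˣ, (u : ZMod n) = q :=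
    ⟨ZMod.unitOfIsCoprime q (Int.isCoprime_iff_gcd_eq_one.mpr hq), rfl⟩
  rw [← ZMod.mulSign_eq_sign u π (hu ▸ hπ)]
  exact ⟨fun h => ZMod.mulSign_of_mod_four_eq_zero h q u hu,
    fun h => ZMod.mulSign_eq_jacobiSym (Nat.odd_iff.mpr h) q u hu,
    fun h => ZMod.mulSign_of_mod_four_eq_two h u⟩
end

section
/- For the sign character sgn_R of the automorphism group of a reduced root system R, the value sgn_R(v) for v ∈ Aut(R) equals (-1)^{|R|} times (-1)^{number of orbits of ⟨v⟩ on R}; equivalently, since |R| is even, sgn_R(v) = (-1)^{|⟨v⟩\R|}. -/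
open scoped RealInnerProductSpace

variable {V : Type*} [NormedAddCommGroup V] [InnerProductSpace ℝ V] [FiniteDimensional ℝ V]

/-- A (reduced) root system in a real inner product space: a finite set of nonzero vectors,
closed under the associated reflections, with integral pairings, and reduced. -/
structure RootSystemData (V : Type*) [NormedAddCommGroup V] [InnerProductSpace ℝ V] where
  carrier : Finset V
  ne_zero : ∀ α ∈ carrier, α ≠ 0
  reduced : ∀ α ∈ carrier, ∀ t : ℝ, t • α ∈ carrier → t = 1 ∨ t = -1
  refl_mem : ∀ α ∈ carrier, ∀ β ∈ carrier, β - (2 * ⟪β, α⟫ / ⟪α, α⟫) • α ∈ carrier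
  int_pairing : ∀ α ∈ carrier, ∀ β ∈ carrier, ∃ n : ℤ, (2 * ⟪β, α⟫ / ⟪α, α⟫) = (n : ℝ)

/-- The reflection in the root `α`: the orthogonal reflection in the hyperplane
perpendicular to `α`, as a linear automorphism of `V`. -/
noncomputable def reflRoot (α : V) : V ≃ₗ[ℝ] V :=
  (Submodule.reflection ((ℝ ∙ α)ᗮ)).toLinearEquiv

/-- The automorphism group of a root system: linear automorphisms of `V` preserving the set of
roots. -/
def RootSystemData.aut (Rs : RootSystemData V) : Subgroup (V ≃ₗ[ℝ] V) where
  carrier := {g | ∀ α : V, α ∈ Rs.carrier ↔ g α ∈ Rs.carrier}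
  one_mem' := fun α => Iff.rfl
  mul_mem' := by
    intro a b ha hb α
    exact (hb α).trans (ha (b α))
  inv_mem' := by
    intro a ha α
    constructor
    · intro h
      have := (ha (a⁻¹ α)).mpr
      have h2 : a (a⁻¹ α) = α := a.apply_symm_apply α
      rw [h2] at this
      exact (ha (a⁻¹ α)).mpr (by rwa [h2])
    · intro h
      have h2 : a (a⁻¹ α) = α := a.apply_symm_apply α
      have := (ha (a⁻¹ α)).mp h
      rwa [h2] at this

/-- A system of simple roots (a base) of a root system: a linearly independent subset of the
roots such that every root is a nonnegative or a nonpositive combination of its elements. -/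
def RootSystemData.IsSimpleSystem (Rs : RootSystemData V) (Δ : Finset V) : Prop :=
  ↑Δ ⊆ (Rs.carrier : Set V) ∧
  LinearIndependent ℝ (fun x : {x : V // x ∈ Δ} => x.1) ∧
  ∀ α ∈ Rs.carrier,
    (∃ c : V → ℝ, (∀ β ∈ Δ, 0 ≤ c β) ∧ α = ∑ β ∈ Δ, c β • β) ∨
    (∃ c : V → ℝ, (∀ β ∈ Δ, c β ≤ 0) ∧ α = ∑ β ∈ Δ, c β • β)

/-- Parabolic subgroups of the automorphism group of a root system: for a system of simple
roots `Δ` and a subset `S ⊆ Δ`, the subgroup `A_{S ⊆ Δ} = W_S ⋊ Stab_{Aut(R,Δ)}(S)`, i.e. the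
subgroup generated by the reflections in roots of `S` together with the automorphisms of the
root system stabilising `Δ` and `S` (setwise). -/
def RootSystemData.IsParabolic (Rs : RootSystemData V) (P : Subgroup (V ≃ₗ[ℝ] V)) : Prop :=
  ∃ Δ S : Finset V, Rs.IsSimpleSystem Δ ∧ S ⊆ Δ ∧
    P = Subgroup.closure
      ((fun α => reflRoot α) '' ↑S ∪
        {g | g ∈ Rs.aut ∧ ⇑g '' ↑Δ = ↑Δ ∧ ⇑g '' ↑S = ↑S})

/-- An automorphism of a root system is elliptic if it belongs to no proper parabolic
subgroup of the automorphism group. -/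
def RootSystemData.IsElliptic (Rs : RootSystemData V) (w : V ≃ₗ[ℝ] V) : Prop :=
  ∀ P : Subgroup (V ≃ₗ[ℝ] V), Rs.IsParabolic P → P ≠ Rs.aut → w ∉ P

variable {V : Type*} [NormedAddCommGroup V] [InnerProductSpace ℝ V]

/-- The orbit equivalence relation of the cyclic group generated by a linear automorphism `v`
on a (stable) finite set of vectors. -/
def orbitSetoidOn (v : V ≃ₗ[ℝ] V) (S : Finset V) : Setoid {x : V // x ∈ S} where
  r x y := ∃ n : ℤ, (v ^ n) x.1 = y.1
  iseqv := by
    refine ⟨fun x => ⟨0, by rw [zpow_zero]; rfl⟩, ?_, ?_⟩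
    · rintro x y ⟨n, hn⟩
      exact ⟨-n, by rw [zpow_neg, ← hn]; exact (v ^ n).symm_apply_apply x.1⟩
    · rintro x y z ⟨m, hm⟩ ⟨n, hn⟩
      refine ⟨n + m, ?_⟩
      rw [zpow_add]
      show (v ^ n) ((v ^ m) x.1) = z.1
      rw [hm, hn]

/-!
Both `ε` and `g ↦ sign (g acting on R)` are characters of `Aut(R)`, and they agree on the
generators `Aut(R, Δ)` and `s_δ` (`δ ∈ Δ`). Indeed negation is a fixed-point-free involution of `R`
commuting with `Aut(R)`, with the positive roots as a fundamental domain. An automorphism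
preserving the positive roots therefore acts on `R` as two copies of one permutation and has
sign `1`, while `s_δ` is the transposition `(δ, -δ)` times such a permutation, because it permutes
the positive roots other than `δ`. So `ε` is the sign of the permutation action on `R`, and the sign
of a permutation of a finite set `X` is `(-1) ^ (|X| + #orbits)`. Finally `|R|` is even, again
because negation pairs off the roots.
-/

open Equiv Equiv.Perm Function Finset

section OrbitCount

variable {α : Type*} [Fintype α] [DecidableEq α]

def cycleTag (σ : Perm α) (x : α) : fixedPoints σ ⊕ σ.cycleFactorsFinset :=
  if hx : σ x = x then .inl ⟨x, hx⟩
  else .inr ⟨σ.cycleOf x, cycleOf_mem_cycleFactorsFinset_iff.mpr (mem_support.mpr hx)⟩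

theorem sameCycle_iff_cycleTag_eq (σ : Perm α) (x y : α) :
    σ.SameCycle x y ↔ cycleTag σ x = cycleTag σ y := by
  by_cases hx : σ x = x <;> by_cases hy : σ y = y <;>
    simp only [cycleTag, hx, hy, dite_true, dite_false, Sum.inl.injEq, Sum.inr.injEq,
      reduceCtorEq, Subtype.mk.injEq, iff_false]
  · exact ⟨fun h => Subtype.ext (h.eq_of_left hx), fun h => (Subtype.ext_iff.mp h).sameCycle σ⟩
  · exact fun h => hy (h.apply_eq_self_iff.mp hx)
  · exact fun h => hx (h.apply_eq_self_iff.mpr hy)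
  · exact sameCycle_iff_cycleOf_eq_of_mem_support (mem_support.mpr hx) (mem_support.mpr hy)

theorem cycleTag_surjective (σ : Perm α) : Surjective (cycleTag σ) := by
  rintro (⟨x, hx⟩ | ⟨c, hc⟩)
  · exact ⟨x, by simp [cycleTag, show σ x = x from hx]⟩
  · obtain ⟨x, hx⟩ := (mem_cycleFactorsFinset_iff.mp hc).1.nonempty_support
    have hσx : σ x ≠ x := mem_support.mp (mem_cycleFactorsFinset_support_le hc hx)
    exact ⟨x, by simp [cycleTag, hσx, cycle_is_cycleOf hx hc]⟩

theorem nat_card_quotient_sameCycle (σ : Perm α) :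
    Nat.card (Quotient (SameCycle.setoid σ)) =
      Fintype.card (fixedPoints σ) + σ.cycleFactorsFinset.card := by
  have hker : SameCycle.setoid σ = Setoid.ker (cycleTag σ) :=
    Setoid.ext (sameCycle_iff_cycleTag_eq σ)
  rw [hker, Nat.card_congr (Setoid.quotientKerEquivOfSurjective _ (cycleTag_surjective σ)),
    Nat.card_sum, Nat.card_eq_fintype_card, Nat.card_eq_fintype_card, Fintype.card_coe]

theorem sign_eq_neg_one_pow_card_mul_neg_one_pow_card_quotient (σ : Perm α) :
    sign σ = (-1) ^ Fintype.card α * (-1) ^ Nat.card (Quotient (SameCycle.setoid σ)) := by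
  have hcard : Multiset.card σ.cycleType = σ.cycleFactorsFinset.card := by
    rw [cycleType_def, Multiset.card_map]; rfl
  rw [nat_card_quotient_sameCycle, card_fixedPoints, sign_of_cycleType, hcard, ← pow_add]
  obtain ⟨k, hk⟩ := Nat.exists_eq_add_of_le σ.sum_cycleType_le
  rw [hk, Nat.add_sub_cancel_left,
    show σ.cycleType.sum + k + (k + #σ.cycleFactorsFinset) =
      σ.cycleType.sum + #σ.cycleFactorsFinset + 2 * k by ring,
    pow_add _ _ (2 * k), pow_mul, Int.units_sq, one_pow, mul_one]

end OrbitCount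

section Halves

variable {α : Type*} [Fintype α] {P : α → Prop} {ν : Perm α}

def subtypeEquivSubtypeNot (hν : ∀ x, P (ν x) ↔ ¬ P x) : {x // P x} ≃ {x // ¬ P x} :=
  ν.subtypeEquiv fun x => by rw [hν, not_not]

theorem even_card_of_forall_apply_iff_not (hν : ∀ x, P (ν x) ↔ ¬ P x) :
    Even (Fintype.card α) := by
  classical
  rw [← Fintype.card_congr (Equiv.sumCompl P), Fintype.card_sum,
    ← Fintype.card_congr (subtypeEquivSubtypeNot hν)]
  exact ⟨_, rfl⟩

theorem sign_eq_one_of_commute_of_mapsTo [DecidableEq α] {π : Perm α}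
    (hν : ∀ x, P (ν x) ↔ ¬ P x) (hπν : Commute π ν) (hπ : ∀ x, P x → P (π x)) : sign π = 1 := by
  classical
  have hπP : ∀ x, P (π x) ↔ P x := by
    refine fun x => ⟨fun hπx => by_contra fun hx => ?_, hπ x⟩
    have := hπ _ ((hν x).mpr hx)
    rw [← Perm.mul_apply, hπν.eq, Perm.mul_apply, hν] at this
    exact this hπx
  have hsplit :
      π = (π.subtypePerm hπP).subtypeCongr (π.subtypePerm fun x => not_congr (hπP x)) := by
    ext x
    by_cases hx : P x <;> simp [hx]
  have hconj : (subtypeEquivSubtypeNot hν).permCongr (π.subtypePerm hπP) =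
      π.subtypePerm fun x => not_congr (hπP x) := by
    ext x
    simp only [subtypeEquivSubtypeNot, permCongr_apply, subtypeEquiv_symm, subtypeEquiv_apply,
      subtypePerm_apply]
    rw [← Perm.mul_apply, ← hπν.eq, Perm.mul_apply, apply_symm_apply]
  rw [hsplit, sign_subtypeCongr, ← hconj, sign_permCongr, Int.units_mul_self]

/-- As `π (ν a) = a`, the permutation `swap a (ν a) * π` maps `P` into itself. -/
theorem sign_eq_neg_one_of_commute_of_mapsTo [DecidableEq α] {π : Perm α} (hνν : Involutive ν)
    (hν : ∀ x, P (ν x) ↔ ¬ P x) (hπν : Commute π ν) {a : α} (ha : P a) (hπa : π a = ν a)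
    (hπ : ∀ x, P x → x ≠ a → P (π x)) : sign π = -1 := by
  have hνa : ¬ P (ν a) := (hν a).not.mpr (not_not.mpr ha)
  have hane : a ≠ ν a := fun h => hνa (h ▸ ha)
  have hswap : Commute (swap a (ν a)) ν := by
    rw [commute_iff_eq, mul_swap_eq_swap_mul, hνν a, swap_comm]
  have hτ : sign (swap a (ν a) * π) = 1 := by
    refine sign_eq_one_of_commute_of_mapsTo hν (hswap.mul_left hπν) fun x hx => ?_
    rcases eq_or_ne x a with rfl | hxa
    · rwa [Perm.mul_apply, hπa, swap_apply_right]
    · have hπx := hπ x hx hxa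
      have hπxa : π x ≠ a := by
        intro h
        have : π x = π (ν a) := by rw [h, ← Perm.mul_apply, hπν.eq, Perm.mul_apply, hπa, hνν]
        exact hνa (π.injective this ▸ hx)
      rwa [Perm.mul_apply, swap_apply_of_ne_of_ne hπxa fun h : π x = ν a => hνa (h ▸ hπx)]
  have := sign_mul (swap a (ν a)) (swap a (ν a) * π)
  rwa [← mul_assoc, swap_mul_self, one_mul, hτ, mul_one, sign_swap hane] at this

end Halves

section NonnegComb

variable {M : Type*} [AddCommGroup M] [Module ℝ M] {Δ : Finset M}

/-- For a simple system `Δ`, the roots `α` with `IsNonnegComb Δ α` are the positive roots. -/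
def IsNonnegComb (Δ : Finset M) (x : M) : Prop :=
  ∃ c : M → ℝ, (∀ β ∈ Δ, 0 ≤ c β) ∧ x = ∑ β ∈ Δ, c β • β

theorem isNonnegComb_of_mem {δ : M} (hδ : δ ∈ Δ) : IsNonnegComb Δ δ := by
  classical
  exact ⟨Pi.single δ 1, fun β _ => (Pi.single_nonneg.mpr zero_le_one : (0 : M → ℝ) ≤ _) β,
    by simp [Pi.single_apply, hδ]⟩

theorem IsNonnegComb.map (f : M →ₗ[ℝ] M) (hf : ∀ β ∈ Δ, IsNonnegComb Δ (f β)) {x : M}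
    (hx : IsNonnegComb Δ x) : IsNonnegComb Δ (f x) := by
  obtain ⟨c, hc, rfl⟩ := hx
  choose! d hd hfd using hf
  refine ⟨fun γ => ∑ β ∈ Δ, c β * d β γ, fun γ hγ =>
    sum_nonneg fun β hβ => mul_nonneg (hc β hβ) (hd β hβ γ hγ), ?_⟩
  calc f (∑ β ∈ Δ, c β • β) = ∑ β ∈ Δ, c β • ∑ γ ∈ Δ, d β γ • γ := by
        rw [map_sum]
        exact sum_congr rfl fun β hβ => by rw [map_smul, ← hfd β hβ]
    _ = ∑ γ ∈ Δ, (∑ β ∈ Δ, c β * d β γ) • γ := by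
        simp_rw [smul_sum, smul_smul, sum_smul]
        exact sum_comm

theorem coeff_eq_of_sum_smul_eq (hΔ : LinearIndependent ℝ (fun x : Δ => x.1)) {c d : M → ℝ}
    (h : ∑ β ∈ Δ, c β • β = ∑ β ∈ Δ, d β • β) {β : M} (hβ : β ∈ Δ) : c β = d β := by
  refine linearIndependent_iff'ₛ.mp hΔ univ (c ∘ Subtype.val) (d ∘ Subtype.val) ?_ ⟨β, hβ⟩
    (mem_univ _)
  simpa only [Function.comp_apply, sum_coe_sort Δ fun β => c β • β,
    sum_coe_sort Δ fun β => d β • β] using h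

theorem eq_zero_of_isNonnegComb_of_isNonnegComb_neg
    (hΔ : LinearIndependent ℝ (fun x : Δ => x.1)) {x : M} (hx : IsNonnegComb Δ x)
    (hnx : IsNonnegComb Δ (-x)) : x = 0 := by
  obtain ⟨c, hc, rfl⟩ := hx
  obtain ⟨d, hd, hcd⟩ := hnx
  have hsum : ∑ β ∈ Δ, c β • β = ∑ β ∈ Δ, (-d β) • β := by
    simp_rw [neg_smul, sum_neg_distrib, ← hcd, neg_neg]
  refine sum_eq_zero fun β hβ => ?_
  have := coeff_eq_of_sum_smul_eq hΔ hsum hβ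
  rw [show c β = 0 by linarith [hc β hβ, hd β hβ], zero_smul]

end NonnegComb

theorem IsNonnegComb.exists_inner_pos {Δ : Finset V} {x : V} (hx : IsNonnegComb Δ x)
    (hx0 : x ≠ 0) : ∃ δ ∈ Δ, 0 < ⟪x, δ⟫ := by
  by_contra! hcon
  obtain ⟨c, hc, hxc⟩ := hx
  have h : ⟪x, x⟫ = ∑ β ∈ Δ, c β * ⟪x, β⟫ := by
    nth_rw 2 [hxc]
    simp_rw [inner_sum, real_inner_smul_right]
  refine hx0 (real_inner_self_nonpos.mp ?_)
  exact h ▸ sum_nonpos fun β hβ => mul_nonpos_of_nonneg_of_nonpos (hc β hβ) (hcon β hβ)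

theorem reflRoot_apply (α x : V) : reflRoot α x = x - (2 * ⟪x, α⟫ / ⟪α, α⟫) • α := by
  rw [reflRoot, LinearIsometryEquiv.coe_toLinearEquiv, Submodule.reflection_apply,
    Submodule.starProjection_orthogonal_val, Submodule.starProjection_singleton,
    real_inner_comm x α, real_inner_self_eq_norm_sq]
  simp only [RCLike.ofReal_real_eq_id, id]
  match_scalars <;> ring

theorem reflRoot_reflRoot (α x : V) : reflRoot α (reflRoot α x) = x :=
  Submodule.reflection_reflection _ x

theorem reflRoot_mul_self (α : V) : reflRoot α * reflRoot α = 1 :=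
  LinearEquiv.ext (reflRoot_reflRoot α)

theorem reflRoot_self {α : V} (hα : α ≠ 0) : reflRoot α α = -α := by
  rw [reflRoot_apply, mul_div_assoc, div_self (inner_self_ne_zero.mpr hα)]
  module

namespace RootSystemData

variable {Rs : RootSystemData V} {Δ : Finset V} {α β γ δ : V}

theorem apply_mem_of_mem_aut {g : V ≃ₗ[ℝ] V} (hg : g ∈ Rs.aut) (hα : α ∈ Rs.carrier) :
    g α ∈ Rs.carrier :=
  (hg α).mp hα

theorem reflRoot_mem (hδ : δ ∈ Rs.carrier) (hα : α ∈ Rs.carrier) :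
    reflRoot δ α ∈ Rs.carrier := by
  rw [reflRoot_apply]
  exact Rs.refl_mem δ hδ α hα

theorem neg_mem (hα : α ∈ Rs.carrier) : -α ∈ Rs.carrier :=
  reflRoot_self (Rs.ne_zero α hα) ▸ reflRoot_mem hα hα

theorem reflRoot_mem_aut (hδ : δ ∈ Rs.carrier) : reflRoot δ ∈ Rs.aut := fun α =>
  ⟨reflRoot_mem hδ, fun h => reflRoot_reflRoot δ α ▸ reflRoot_mem hδ h⟩

theorem inner_sq_lt_inner_self_mul_inner_self (hα : α ∈ Rs.carrier) (hδ : δ ∈ Rs.carrier)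
    (h₁ : α ≠ δ) (h₂ : α ≠ -δ) : ⟪α, δ⟫ ^ 2 < ⟪α, α⟫ * ⟪δ, δ⟫ := by
  have hlt : |⟪δ, α⟫| < ‖δ‖ * ‖α‖ := by
    refine (abs_real_inner_le_norm δ α).lt_of_ne fun h => ?_
    obtain ⟨r, -, hr⟩ := (norm_inner_eq_norm_iff (𝕜 := ℝ) (Rs.ne_zero δ hδ)
      (Rs.ne_zero α hα)).mp h
    rcases Rs.reduced δ hδ r (hr ▸ hα) with rfl | rfl
    · exact h₁ (by rw [hr, one_smul])
    · exact h₂ (by rw [hr, neg_one_smul])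
  rw [real_inner_self_eq_norm_sq, real_inner_self_eq_norm_sq, real_inner_comm, ← sq_abs]
  nlinarith [abs_nonneg ⟪δ, α⟫]

/-- The two Cartan integers are positive with product less than `4` (strict Cauchy–Schwarz), so
one of them is `1`. -/
theorem sub_mem_of_inner_pos (hα : α ∈ Rs.carrier) (hδ : δ ∈ Rs.carrier) (hin : 0 < ⟪α, δ⟫)
    (h₁ : α ≠ δ) (h₂ : α ≠ -δ) : α - δ ∈ Rs.carrier := by
  have hαα : 0 < ⟪α, α⟫ := real_inner_self_pos.mpr (Rs.ne_zero α hα)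
  have hδδ : 0 < ⟪δ, δ⟫ := real_inner_self_pos.mpr (Rs.ne_zero δ hδ)
  obtain ⟨m, hm⟩ := Rs.int_pairing δ hδ α hα
  obtain ⟨n, hn⟩ := Rs.int_pairing α hα δ hδ
  rw [real_inner_comm] at hn
  have hm0 : 0 < m := Int.cast_pos.mp (hm ▸ by positivity : (0 : ℝ) < m)
  have hn0 : 0 < n := Int.cast_pos.mp (hn ▸ by positivity : (0 : ℝ) < n)
  have hmn : m * n < 4 := by
    suffices (m * n : ℝ) < 4 by exact_mod_cast this
    rw [← hm, ← hn, div_mul_div_comm, div_lt_iff₀ (by positivity)]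
    nlinarith [inner_sq_lt_inner_self_mul_inner_self hα hδ h₁ h₂]
  have hmn1 : m = 1 ∨ n = 1 := by
    by_contra! h
    have : 2 * 2 ≤ m * n := Int.mul_le_mul (by omega) (by omega) (by norm_num) (by omega)
    omega
  rcases hmn1 with h | h
  · have := Rs.refl_mem δ hδ α hα
    rwa [hm, h, Int.cast_one, one_smul] at this
  · have := Rs.neg_mem (Rs.refl_mem α hα δ hδ)
    rw [real_inner_comm] at this
    rwa [hn, h, Int.cast_one, one_smul, neg_sub] at this

namespace IsSimpleSystem

theorem isNonnegComb_or_neg (hΔ : Rs.IsSimpleSystem Δ) (hα : α ∈ Rs.carrier) :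
    IsNonnegComb Δ α ∨ IsNonnegComb Δ (-α) := by
  refine (hΔ.2.2 α hα).imp id fun ⟨c, hc, hαc⟩ => ⟨-c, fun β hβ => neg_nonneg.mpr (hc β hβ), ?_⟩
  simp_rw [hαc, Pi.neg_apply, neg_smul, sum_neg_distrib]

theorem isNonnegComb_neg_iff (hΔ : Rs.IsSimpleSystem Δ) (hα : α ∈ Rs.carrier) :
    IsNonnegComb Δ (-α) ↔ ¬ IsNonnegComb Δ α :=
  ⟨fun hn hp => Rs.ne_zero α hα (eq_zero_of_isNonnegComb_of_isNonnegComb_neg hΔ.2.1 hp hn),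
    (hΔ.isNonnegComb_or_neg hα).resolve_left⟩

theorem ne_neg_of_mem (hΔ : Rs.IsSimpleSystem Δ) (hα : α ∈ Rs.carrier)
    (hαpos : IsNonnegComb Δ α) (hδ : δ ∈ Δ) : α ≠ -δ := by
  classical
  rintro rfl
  exact (hΔ.isNonnegComb_neg_iff hα).mp (by rw [neg_neg]; exact isNonnegComb_of_mem hδ) hαpos

theorem exists_coeff_pos_of_ne (hΔ : Rs.IsSimpleSystem Δ) (hα : α ∈ Rs.carrier) (hδ : δ ∈ Δ)
    (hne : α ≠ δ) {c : V → ℝ} (hc : ∀ β ∈ Δ, 0 ≤ c β) (hαc : α = ∑ β ∈ Δ, c β • β) :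
    ∃ β ∈ Δ, β ≠ δ ∧ 0 < c β := by
  by_contra! hcon
  have hαδ : α = c δ • δ := by
    rw [hαc, sum_eq_single_of_mem δ hδ fun β hβ hβδ => ?_]
    rw [le_antisymm (hcon β hβ hβδ) (hc β hβ), zero_smul]
  rcases Rs.reduced δ (hΔ.1 hδ) (c δ) (hαδ ▸ hα) with h | h
  · exact hne (by rw [hαδ, h, one_smul])
  · exact hΔ.ne_neg_of_mem hα ⟨c, hc, hαc⟩ hδ (by rw [hαδ, h, neg_one_smul])

/-- `s_δ` only changes the coefficient at `δ`, and a positive root other than `δ` has a positive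
coefficient elsewhere. -/
theorem isNonnegComb_reflRoot (hΔ : Rs.IsSimpleSystem Δ) (hα : α ∈ Rs.carrier) (hδ : δ ∈ Δ)
    (hne : α ≠ δ) (hαpos : IsNonnegComb Δ α) : IsNonnegComb Δ (reflRoot δ α) := by
  classical
  obtain ⟨c, hc, hαc⟩ := hαpos
  obtain ⟨β₀, hβ₀, hβ₀δ, hcβ₀⟩ := hΔ.exists_coeff_pos_of_ne hα hδ hne hc hαc
  set c' : V → ℝ := c - Pi.single δ (2 * ⟪α, δ⟫ / ⟪δ, δ⟫)
  have hsα : reflRoot δ α = ∑ β ∈ Δ, c' β • β := by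
    simp_rw [c', Pi.sub_apply, sub_smul, sum_sub_distrib, ← hαc, Pi.single_apply, ite_smul,
      zero_smul, sum_ite_eq' Δ δ, if_pos hδ, reflRoot_apply]
  refine (hΔ.isNonnegComb_or_neg (Rs.reflRoot_mem (hΔ.1 hδ) hα)).resolve_right
    fun ⟨d, hd, hsd⟩ => ?_
  have hsum : ∑ β ∈ Δ, c' β • β = ∑ β ∈ Δ, (-d) β • β := by
    simp_rw [← hsα, Pi.neg_apply, neg_smul, sum_neg_distrib, ← hsd, neg_neg]
  have := coeff_eq_of_sum_smul_eq hΔ.2.1 hsum hβ₀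
  simp only [c', Pi.sub_apply, Pi.neg_apply, Pi.single_eq_of_ne hβ₀δ, sub_zero] at this
  linarith [hd β₀ hβ₀]

/-- Comparing coefficients, both summands would be nonnegative multiples of `δ`, hence equal to
`δ` by reducedness. -/
theorem ne_add (hΔ : Rs.IsSimpleSystem Δ) (hδ : δ ∈ Δ) (hβ : β ∈ Rs.carrier)
    (hβpos : IsNonnegComb Δ β) (hγ : γ ∈ Rs.carrier) (hγpos : IsNonnegComb Δ γ) :
    δ ≠ β + γ := by
  classical
  intro hδβγ
  obtain ⟨b, hb, hβb⟩ := hβpos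
  obtain ⟨c, hc, hγc⟩ := hγpos
  have hsum : ∑ x ∈ Δ, (b + c) x • x = ∑ x ∈ Δ, (Pi.single δ 1 : V → ℝ) x • x := by
    simp_rw [Pi.add_apply, add_smul, sum_add_distrib, ← hβb, ← hγc, ← hδβγ, Pi.single_apply,
      ite_smul, one_smul, zero_smul, sum_ite_eq' Δ δ, if_pos hδ]
  have hcoeff x (hx : x ∈ Δ) : b x + c x = (Pi.single δ 1 : V → ℝ) x :=
    coeff_eq_of_sum_smul_eq hΔ.2.1 hsum hx
  have hone (a : V → ℝ) (ha : ∀ x ∈ Δ, 0 ≤ a x) (hab : ∀ x ∈ Δ, a x ≤ b x + c x)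
      (hmem : ∑ x ∈ Δ, a x • x ∈ Rs.carrier) : a δ = 1 := by
    have ha0 : ∀ x ∈ Δ, x ≠ δ → a x = 0 := fun x hx hxδ => by
      have := hcoeff x hx
      rw [Pi.single_eq_of_ne hxδ] at this
      linarith [ha x hx, hab x hx, hb x hx, hc x hx]
    rw [sum_eq_single_of_mem δ hδ fun x hx hxδ => by rw [ha0 x hx hxδ, zero_smul]] at hmem
    exact (Rs.reduced δ (hΔ.1 hδ) _ hmem).resolve_right (by linarith [ha δ hδ])
  have hbδ := hone b hb (fun x hx => by linarith [hc x hx]) (hβb ▸ hβ)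
  have hcδ := hone c hc (fun x hx => by linarith [hb x hx]) (hγc ▸ hγ)
  have := hcoeff δ hδ
  rw [hbδ, hcδ, Pi.single_eq_same] at this
  norm_num at this

theorem mem_of_forall_ne_add (hΔ : Rs.IsSimpleSystem Δ) (hα : α ∈ Rs.carrier)
    (hαpos : IsNonnegComb Δ α)
    (hind : ∀ β ∈ Rs.carrier, IsNonnegComb Δ β →
      ∀ γ ∈ Rs.carrier, IsNonnegComb Δ γ → α ≠ β + γ) :
    α ∈ Δ := by
  classical
  by_contra hαΔ
  obtain ⟨δ, hδ, hin⟩ := hαpos.exists_inner_pos (Rs.ne_zero α hα)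
  have hsub : α - δ ∈ Rs.carrier := Rs.sub_mem_of_inner_pos hα (hΔ.1 hδ) hin
    (fun h => hαΔ (h ▸ hδ)) (hΔ.ne_neg_of_mem hα hαpos hδ)
  rcases hΔ.isNonnegComb_or_neg hsub with h | h
  · exact hind _ hsub h δ (hΔ.1 hδ) (isNonnegComb_of_mem hδ) (sub_add_cancel α δ).symm
  · rw [neg_sub] at h
    exact hΔ.ne_add hδ (neg_sub α δ ▸ Rs.neg_mem hsub) h hα hαpos (sub_add_cancel δ α).symm

theorem image_eq_of_forall_isNonnegComb (hΔ : Rs.IsSimpleSystem Δ) {g : V ≃ₗ[ℝ] V}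
    (hg : g ∈ Rs.aut) (hpos : ∀ α ∈ Rs.carrier, IsNonnegComb Δ α → IsNonnegComb Δ (g α)) :
    g '' Δ = Δ := by
  classical
  set P : Set V := {α | α ∈ Rs.carrier ∧ IsNonnegComb Δ α}
  have hP : Set.BijOn g P P :=
    ((Rs.carrier.finite_toSet.subset fun _ h => h.1).injOn_iff_bijOn_of_mapsTo
      fun α hα => show g α ∈ P from ⟨Rs.apply_mem_of_mem_aut hg hα.1, hpos α hα.1 hα.2⟩).mp
      g.injective.injOn
  have hΔΔ : Set.MapsTo g Δ Δ := by
    intro δ hδ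
    obtain ⟨hgδ, hgδpos⟩ := hP.mapsTo (show δ ∈ P from ⟨hΔ.1 hδ, isNonnegComb_of_mem hδ⟩)
    refine hΔ.mem_of_forall_ne_add hgδ hgδpos fun β hβ hβpos γ hγ hγpos hsum => ?_
    obtain ⟨β', ⟨hβ', hβ'pos⟩, rfl⟩ := hP.surjOn (show β ∈ P from ⟨hβ, hβpos⟩)
    obtain ⟨γ', ⟨hγ', hγ'pos⟩, rfl⟩ := hP.surjOn (show γ ∈ P from ⟨hγ, hγpos⟩)
    exact hΔ.ne_add hδ hβ' hβ'pos hγ' hγ'pos (g.injective (by rw [hsum, map_add]))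
  exact ((Δ.finite_toSet.injOn_iff_bijOn_of_mapsTo hΔΔ).mp g.injective.injOn).image_eq

end IsSimpleSystem

open Classical in
noncomputable def inversions (Rs : RootSystemData V) (Δ : Finset V) (g : V ≃ₗ[ℝ] V) :
    Finset V :=
  Rs.carrier.filter fun α => IsNonnegComb Δ α ∧ IsNonnegComb Δ (-g α)

theorem mem_inversions {g : V ≃ₗ[ℝ] V} :
    α ∈ Rs.inversions Δ g ↔ α ∈ Rs.carrier ∧ IsNonnegComb Δ α ∧ IsNonnegComb Δ (-g α) := by
  classical
  simp [inversions]

theorem IsSimpleSystem.card_inversions_mul_reflRoot_lt (hΔ : Rs.IsSimpleSystem Δ)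
    {g : V ≃ₗ[ℝ] V} (hg : g ∈ Rs.aut) (hδ : δ ∈ Δ) (hgδ : IsNonnegComb Δ (-g δ)) :
    #(Rs.inversions Δ (g * reflRoot δ)) < #(Rs.inversions Δ g) := by
  classical
  have hδR := hΔ.1 hδ
  have hδ0 := Rs.ne_zero δ hδR
  have hδinv : δ ∈ Rs.inversions Δ g := mem_inversions.mpr ⟨hδR, isNonnegComb_of_mem hδ, hgδ⟩
  refine (card_le_card_of_injOn (reflRoot δ) (fun β hβ => ?_)
    (reflRoot δ).injective.injOn).trans_lt (card_erase_lt_of_mem hδinv)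
  obtain ⟨hβR, hβpos, hgsβ⟩ := mem_inversions.mp hβ
  have hβδ : β ≠ δ := by
    rintro rfl
    rw [LinearEquiv.mul_apply, reflRoot_self hδ0, map_neg, neg_neg] at hgsβ
    exact (hΔ.isNonnegComb_neg_iff (Rs.apply_mem_of_mem_aut hg hδR)).mp hgδ hgsβ
  refine mem_erase.mpr ⟨fun h => hΔ.ne_neg_of_mem hβR hβpos hδ ?_, mem_inversions.mpr
    ⟨Rs.reflRoot_mem hδR hβR, hΔ.isNonnegComb_reflRoot hβR hδ hβδ hβpos, hgsβ⟩⟩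
  rw [← reflRoot_reflRoot δ β, h, reflRoot_self hδ0]

/-- If `g δ` is negative, right multiplication by `s_δ` removes the inversion `δ`; otherwise `g`
permutes the positive roots, hence the simple ones. -/
theorem IsSimpleSystem.closure_reflRoot_union_stabilizer_eq_top (hΔ : Rs.IsSimpleSystem Δ) :
    Subgroup.closure ({g : Rs.aut | ∃ δ ∈ Δ, (g : V ≃ₗ[ℝ] V) = reflRoot δ} ∪
      {g | ⇑(g : V ≃ₗ[ℝ] V) '' Δ = Δ}) = ⊤ := by
  set S : Set Rs.aut := {g | ∃ δ ∈ Δ, (g : V ≃ₗ[ℝ] V) = reflRoot δ} ∪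
    {g | ⇑(g : V ≃ₗ[ℝ] V) '' Δ = Δ}
  refine eq_top_iff.mpr fun g _ => ?_
  induction hn : #(Rs.inversions Δ g) using Nat.strong_induction_on generalizing g with
  | _ n ih =>
  by_cases hex : ∃ δ ∈ Δ, IsNonnegComb Δ (-(g : V ≃ₗ[ℝ] V) δ)
  · obtain ⟨δ, hδ, hgδ⟩ := hex
    set s : Rs.aut := ⟨reflRoot δ, reflRoot_mem_aut (hΔ.1 hδ)⟩
    have hss : s * s = 1 := Subtype.ext (reflRoot_mul_self δ)
    have hgs := ih _ (hn ▸ hΔ.card_inversions_mul_reflRoot_lt g.2 hδ hgδ) (g * s) trivial rfl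
    have hs : s ∈ Subgroup.closure S := Subgroup.subset_closure (Or.inl ⟨δ, hδ, rfl⟩)
    simpa [mul_assoc, hss] using mul_mem hgs hs
  · push Not at hex
    refine Subgroup.subset_closure (Or.inr (hΔ.image_eq_of_forall_isNonnegComb g.2 fun α _ hα =>
      hα.map (g : V ≃ₗ[ℝ] V).toLinearMap fun β hβ => ?_))
    exact (hΔ.isNonnegComb_or_neg (Rs.apply_mem_of_mem_aut g.2 (hΔ.1 hβ))).resolve_right (hex β hβ)

def autPerm (Rs : RootSystemData V) : Rs.aut →* Perm Rs.carrier where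
  toFun g := (g : V ≃ₗ[ℝ] V).toEquiv.subtypeEquiv g.2
  map_one' := rfl
  map_mul' _ _ := rfl

def negPerm (Rs : RootSystemData V) : Perm Rs.carrier :=
  Involutive.toPerm (fun x => ⟨-x.1, Rs.neg_mem x.2⟩) fun x => Subtype.ext (neg_neg x.1)

theorem commute_autPerm_negPerm (g : Rs.aut) : Commute (Rs.autPerm g) Rs.negPerm :=
  Perm.ext fun x => Subtype.ext (map_neg (g : V ≃ₗ[ℝ] V) x.1)

theorem orbitSetoidOn_eq_sameCycle_setoid (g : Rs.aut) :
    orbitSetoidOn (g : V ≃ₗ[ℝ] V) Rs.carrier = SameCycle.setoid (Rs.autPerm g) := by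
  refine Setoid.ext fun x y => exists_congr fun n => ?_
  rw [← map_zpow, Subtype.ext_iff]
  rfl

namespace IsSimpleSystem

theorem isNonnegComb_negPerm_iff (hΔ : Rs.IsSimpleSystem Δ) (x : Rs.carrier) :
    IsNonnegComb Δ (Rs.negPerm x : V) ↔ ¬ IsNonnegComb Δ (x : V) :=
  hΔ.isNonnegComb_neg_iff x.2

theorem even_card_carrier (hΔ : Rs.IsSimpleSystem Δ) : Even #Rs.carrier := by
  classical
  rw [← Fintype.card_coe]
  exact even_card_of_forall_apply_iff_not (P := fun x : Rs.carrier => IsNonnegComb Δ x.1)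
    hΔ.isNonnegComb_negPerm_iff

theorem sign_autPerm_of_image_eq [DecidableEq V] (hΔ : Rs.IsSimpleSystem Δ) {g : Rs.aut}
    (hg : ⇑(g : V ≃ₗ[ℝ] V) '' Δ = Δ) : sign (Rs.autPerm g) = 1 := by
  refine sign_eq_one_of_commute_of_mapsTo (P := fun x : Rs.carrier => IsNonnegComb Δ x.1)
    hΔ.isNonnegComb_negPerm_iff (commute_autPerm_negPerm g)
    fun x hx => hx.map (g : V ≃ₗ[ℝ] V).toLinearMap fun β hβ => isNonnegComb_of_mem ?_
  rw [← Finset.mem_coe, ← hg]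
  exact Set.mem_image_of_mem _ hβ

theorem sign_autPerm_reflRoot [DecidableEq V] (hΔ : Rs.IsSimpleSystem Δ) (hδ : δ ∈ Δ)
    (hmem : reflRoot δ ∈ Rs.aut) : sign (Rs.autPerm ⟨reflRoot δ, hmem⟩) = -1 :=
  sign_eq_neg_one_of_commute_of_mapsTo (π := Rs.autPerm ⟨reflRoot δ, hmem⟩)
    (P := fun x : Rs.carrier => IsNonnegComb Δ x.1) (fun x => Subtype.ext (neg_neg x.1))
    hΔ.isNonnegComb_negPerm_iff (commute_autPerm_negPerm _) (a := ⟨δ, hΔ.1 hδ⟩)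
    (isNonnegComb_of_mem hδ) (Subtype.ext (reflRoot_self (Rs.ne_zero δ (hΔ.1 hδ))))
    fun x hx hxδ => hΔ.isNonnegComb_reflRoot x.2 hδ (fun h => hxδ (Subtype.ext h)) hx

end IsSimpleSystem

end RootSystemData

theorem sgn_eq_perm_sign_general
    {V : Type*} [NormedAddCommGroup V] [InnerProductSpace ℝ V]
    (Rs : RootSystemData V) (Δ : Finset V) (hΔ : Rs.IsSimpleSystem Δ)
    (ε : ↥Rs.aut →* ℤˣ)
    (hstab : ∀ g : Rs.aut, ⇑(g : V ≃ₗ[ℝ] V) '' ↑Δ = ↑Δ → ε g = 1)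
    (hrefl : ∀ α ∈ Δ, ∀ hα : reflRoot α ∈ Rs.aut, ε ⟨reflRoot α, hα⟩ = -1)
    (v : Rs.aut) :
    ε v = (-1 : ℤˣ) ^ Rs.carrier.card *
        (-1 : ℤˣ) ^ Nat.card (Quotient (orbitSetoidOn (v : V ≃ₗ[ℝ] V) Rs.carrier)) ∧
    ε v = (-1 : ℤˣ) ^ Nat.card (Quotient (orbitSetoidOn (v : V ≃ₗ[ℝ] V) Rs.carrier)) := by
  classical
  have hε : ε = sign.comp Rs.autPerm := by
    refine MonoidHom.eq_of_eqOn_dense hΔ.closure_reflRoot_union_stabilizer_eq_top ?_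
    rintro g (⟨δ, hδ, hg⟩ | hg)
    · rw [MonoidHom.comp_apply, show g = ⟨reflRoot δ, hg ▸ g.2⟩ from Subtype.ext hg, hrefl δ hδ,
        hΔ.sign_autPerm_reflRoot hδ]
    · rw [MonoidHom.comp_apply, hstab g hg, hΔ.sign_autPerm_of_image_eq hg]
  have hsign : ε v = (-1) ^ #Rs.carrier *
      (-1) ^ Nat.card (Quotient (orbitSetoidOn (v : V ≃ₗ[ℝ] V) Rs.carrier)) := by
    rw [hε, MonoidHom.comp_apply, sign_eq_neg_one_pow_card_mul_neg_one_pow_card_quotient,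
      Fintype.card_coe, Rs.orbitSetoidOn_eq_sameCycle_setoid]
  exact ⟨hsign, by rw [hsign, hΔ.even_card_carrier.neg_one_pow, one_mul]⟩

/-- The sign character `sgn_R` of the automorphism group of a reduced root system `R` — the
unique homomorphism to `{±1}` trivial on the stabiliser of a system of simple roots and
sending each reflection in a simple root to `-1` — satisfies, for every automorphism `v`,
`sgn_R(v) = (-1)^{|R|} · (-1)^{#orbits of ⟨v⟩ on R}`; equivalently (since `|R|` is even)
`sgn_R(v) = (-1)^{|⟨v⟩\R|}`. -/
theorem sgn_eq_perm_sign
    {V : Type*} [NormedAddCommGroup V] [InnerProductSpace ℝ V] [FiniteDimensional ℝ V]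
    (Rs : RootSystemData V) (Δ : Finset V) (hΔ : Rs.IsSimpleSystem Δ)
    (ε : ↥Rs.aut →* ℤˣ)
    (hstab : ∀ g : Rs.aut, ⇑(g : V ≃ₗ[ℝ] V) '' ↑Δ = ↑Δ → ε g = 1)
    (hrefl : ∀ α ∈ Δ, ∀ hα : reflRoot α ∈ Rs.aut, ε ⟨reflRoot α, hα⟩ = -1)
    (v : Rs.aut) :
    ε v = (-1 : ℤˣ) ^ Rs.carrier.card *
        (-1 : ℤˣ) ^ Nat.card (Quotient (orbitSetoidOn (v : V ≃ₗ[ℝ] V) Rs.carrier)) ∧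
    ε v = (-1 : ℤˣ) ^ Nat.card (Quotient (orbitSetoidOn (v : V ≃ₗ[ℝ] V) Rs.carrier)) :=
  sgn_eq_perm_sign_general Rs Δ hΔ ε hstab hrefl v
end
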